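/- Let ε ∈ ℝ with ε = 1 or ε = −1, let α, β, λ be real numbers with β ≠ 0, and set δ = (β² + λ² − αλ − ε)/β. Define complex 3×3 matrices A = !![−(I/3)(β + δ), ε·I, 0; I, (I/3)(2δ − β), −λ; 0, λ, (I/3)(2β − δ)] and B = !![−(I/3)(α + λ), 0, −ε; 0, (I/3)(2λ − α), −β; 1, β, (I/3)(2α − λ)] (where I = Complex.I and real entries are coerced). Then A * B = B * A. -/

import Mathlib

open Complex Matrix

/-- The matrix `A(s)` from the proof of Theorem 4.4. -/
noncomputable def matA (ε β δ l : ℝ) : Matrix (Fin 3) (Fin 3) ℂ :=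
  !![-(I / 3) * ((β : ℂ) + (δ : ℂ)), (ε : ℂ) * I, 0;
     I, (I / 3) * (2 * (δ : ℂ) - (β : ℂ)), -(l : ℂ);
     0, (l : ℂ), (I / 3) * (2 * (β : ℂ) - (δ : ℂ))]

/-- The matrix `B(s)` from the proof of Theorem 4.4. -/
noncomputable def matB (ε α β l : ℝ) : Matrix (Fin 3) (Fin 3) ℂ :=
  !![-(I / 3) * ((α : ℂ) + (l : ℂ)), 0, -(ε : ℂ);
     0, (I / 3) * (2 * (l : ℂ) - (α : ℂ)), -(β : ℂ);
     1, (β : ℂ), (I / 3) * (2 * (α : ℂ) - (l : ℂ))]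

/-- The value of `δ` in the paper is exactly the one that kills this scalar. -/
theorem matA_mul_matB_sub_matB_mul_matA (ε α β l δ : ℝ) :
    matA ε β δ l * matB ε α β l - matB ε α β l * matA ε β δ l =
      (I * ((β : ℂ) ^ 2 + (l : ℂ) ^ 2 - α * l - ε - δ * β)) •
        (!![0, 0, 0; 0, 0, 1; 0, 1, 0] : Matrix (Fin 3) (Fin 3) ℂ) := by
  ext i j
  fin_cases i <;> fin_cases j <;>
    simp [matA, matB] <;> ring_nf <;> simp only [I_sq] <;> ring

theorem commute_matA_matB (ε α β l δ : ℝ) (hδ : δ * β = β ^ 2 + l ^ 2 - α * l - ε) :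
    Commute (matA ε β δ l) (matB ε α β l) := by
  have hδ' : (δ : ℂ) * β = (β : ℂ) ^ 2 + (l : ℂ) ^ 2 - α * l - ε := by exact_mod_cast hδ
  rw [Commute, SemiconjBy, ← sub_eq_zero, matA_mul_matB_sub_matB_mul_matA, hδ', sub_self,
    mul_zero, zero_smul]

theorem stmt11_general (ε α β l δ : ℝ) (hβ : β ≠ 0)
    (hδ : δ = (β ^ 2 + l ^ 2 - α * l - ε) / β) :
    matA ε β δ l * matB ε α β l = matB ε α β l * matA ε β δ l :=
  (commute_matA_matB ε α β l δ (by rw [hδ, div_mul_cancel₀ _ hβ])).eq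

/-- The solvability condition `[A(s), B(s)] = 0` asserted in the proof of Theorem 4.4,
with `δ = (β² + λ² − αλ − ε)/β` and curvature normalized so that `c = ε = ±1`. -/
theorem stmt11 (ε α β l δ : ℝ) (hε : ε = 1 ∨ ε = -1) (hβ : β ≠ 0)
    (hδ : δ = (β ^ 2 + l ^ 2 - α * l - ε) / β) :
    matA ε β δ l * matB ε α β l = matB ε α β l * matA ε β δ l :=
  stmt11_general ε α β l δ hβ hδ
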